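/- Let s₇ ≈ 2.247 be the unique root in the interval (2,3) of s³ − 2s² − s + 1 = 0. For every real s with s ≥ s₇, every instance of the favorite-machine scheduling game on two machines with parameter s, and every allocation x that is a strong equilibrium, the makespan of x is at most (s + 1)/s times the optimal makespan. -/

import Mathlib

open Finset

/-- Processing time of job `j` on machine `i` in the favorite-machine model:
`q j` on the favorite machine `f j` and `s * q j` on the other machine. -/
noncomputable def ptime (s : ℝ) {n : ℕ} (q : Fin n → ℝ) (f : Fin n → Fin 2)
    (i : Fin 2) (j : Fin n) : ℝ :=
  if f j = i then q j else s * q j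

/-- Load of machine `i` under allocation `x`. -/
noncomputable def load (s : ℝ) {n : ℕ} (q : Fin n → ℝ) (f : Fin n → Fin 2)
    (x : Fin n → Fin 2) (i : Fin 2) : ℝ :=
  ∑ j ∈ Finset.univ.filter (fun j => x j = i), ptime s q f i j

/-- Makespan (maximum load) of allocation `x`. -/
noncomputable def makespan (s : ℝ) {n : ℕ} (q : Fin n → ℝ) (f : Fin n → Fin 2)
    (x : Fin n → Fin 2) : ℝ :=
  max (load s q f x 0) (load s q f x 1)

/-- The optimal (minimum) makespan over all allocations. -/
noncomputable def optMakespan (s : ℝ) {n : ℕ} (q : Fin n → ℝ) (f : Fin n → Fin 2) : ℝ :=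
  ⨅ y : Fin n → Fin 2, makespan s q f y

/-- Pure Nash equilibrium: no job can move to the other machine and find there
a load smaller than its current cost. -/
def IsNE (s : ℝ) {n : ℕ} (q : Fin n → ℝ) (f : Fin n → Fin 2)
    (x : Fin n → Fin 2) : Prop :=
  ∀ j : Fin n, ∀ i : Fin 2, i ≠ x j →
    load s q f x (x j) ≤ load s q f (Function.update x j i) i

/-- Strong equilibrium: for every deviation `y` differing from `x` on a nonempty
set of jobs, some deviating job does not improve its cost. -/
def IsSE (s : ℝ) {n : ℕ} (q : Fin n → ℝ) (f : Fin n → Fin 2)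
    (x : Fin n → Fin 2) : Prop :=
  ∀ y : Fin n → Fin 2, (∃ j, y j ≠ x j) →
    ∃ j, y j ≠ x j ∧ load s q f x (x j) ≤ load s q f y (y j)


/-! Fix an allocation `y`, put `M := makespan y`, and let machine `a` have load `C > M` in the strong
equilibrium `x`. The other machine `b` then has load `L ≤ M`: the coalition switching from `x` to
`y` contains a job that does not improve. If no job moves from `a` to its favorite `b` in `y`,
the jobs leaving `a` cost `s` times as much on `b`, so `C ≤ M + M / s`. Otherwise let `js` be such
a job and consider the coalition of `js` (moving to `b`) and the jobs that `y` moves from `b` to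
their favorite `a` (total size `U`). Either `js` does not improve, and comparing with `y` gives
again `C ≤ M + M / s`; or one of the others does not, i.e. `L + s q_js ≤ C + U`, which with the
Nash condition `C ≤ L + q_js` and `s U ≤ L ≤ M` gives `s (s - 1) (C - L) ≤ M`. -/

lemma fin_two_eq_or_eq_of_ne {a b : Fin 2} (hab : a ≠ b) (i : Fin 2) : i = a ∨ i = b := by
  revert i a b; decide

def movers {n : ℕ} (f : Fin n → Fin 2) (x y : Fin n → Fin 2) (a b c : Fin 2) : Finset (Fin n) :=
  univ.filter fun j => x j = a ∧ y j = b ∧ f j = c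

section

variable {s : ℝ} {n : ℕ} {q : Fin n → ℝ} {f : Fin n → Fin 2} {x y : Fin n → Fin 2}

lemma ptime_nonneg (hs : 0 ≤ s) (hq : ∀ j, 0 ≤ q j) (i : Fin 2) (j : Fin n) :
    0 ≤ ptime s q f i j := by
  unfold ptime; split_ifs
  exacts [hq j, mul_nonneg hs (hq j)]

lemma load_eq_sum_ite (x : Fin n → Fin 2) (i : Fin 2) :
    load s q f x i = ∑ j, if x j = i then ptime s q f i j else 0 :=
  sum_filter _ _

lemma load_nonneg (hs : 0 ≤ s) (hq : ∀ j, 0 ≤ q j) (x : Fin n → Fin 2) (i : Fin 2) :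
    0 ≤ load s q f x i :=
  sum_nonneg fun j _ => ptime_nonneg hs hq i j

lemma load_le_makespan (x : Fin n → Fin 2) (i : Fin 2) : load s q f x i ≤ makespan s q f x := by
  fin_cases i
  exacts [le_max_left _ _, le_max_right _ _]

lemma load_le_load_add_sum {i : Fin 2} (g : Fin n → ℝ)
    (h : ∀ j, (if x j = i then ptime s q f i j else 0) ≤
      (if y j = i then ptime s q f i j else 0) + g j) :
    load s q f x i ≤ load s q f y i + ∑ j, g j := by
  simp only [load_eq_sum_ite, ← sum_add_distrib]
  exact sum_le_sum fun j _ => h j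

lemma mul_sum_le_load (hs : 0 ≤ s) (hq : ∀ j, 0 ≤ q j) {i : Fin 2} {S : Finset (Fin n)}
    (hS : ∀ j ∈ S, x j = i ∧ f j ≠ i) :
    s * ∑ j ∈ S, q j ≤ load s q f x i := by
  rw [mul_sum, load]
  calc ∑ j ∈ S, s * q j = ∑ j ∈ S, ptime s q f i j :=
        sum_congr rfl fun j hj => by simp [ptime, (hS j hj).2]
    _ ≤ _ := sum_le_sum_of_subset_of_nonneg (fun j hj => mem_filter.2 ⟨mem_univ _, (hS j hj).1⟩)
        fun j _ _ => ptime_nonneg hs hq i j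

lemma mul_sum_movers_le_load_left (hs : 0 ≤ s) (hq : ∀ j, 0 ≤ q j) {a b c : Fin 2} (hc : c ≠ a) :
    s * ∑ j ∈ movers f x y a b c, q j ≤ load s q f x a :=
  mul_sum_le_load hs hq fun j hj => by
    simp only [movers, mem_filter] at hj
    exact ⟨hj.2.1, hj.2.2.2 ▸ hc⟩

lemma mul_sum_movers_le_load_right (hs : 0 ≤ s) (hq : ∀ j, 0 ≤ q j) {a b c : Fin 2} (hc : c ≠ b) :
    s * ∑ j ∈ movers f x y a b c, q j ≤ load s q f y b :=
  mul_sum_le_load hs hq fun j hj => by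
    simp only [movers, mem_filter] at hj
    exact ⟨hj.2.2.1, hj.2.2.2 ▸ hc⟩

lemma load_update_of_ne {j : Fin n} {i : Fin 2} (h : x j ≠ i) :
    load s q f (Function.update x j i) i = load s q f x i + ptime s q f i j := by
  have : univ.filter (fun k => Function.update x j i k = i) = insert j (univ.filter (x · = i)) := by
    ext k
    by_cases hk : k = j <;> simp [hk, Function.update_of_ne]
  rw [load, this, sum_insert (by simp [h]), add_comm, load]

lemma IsSE.isNE (hx : IsSE s q f x) : IsNE s q f x := by
  intro j i hi
  obtain ⟨k, hk, hle⟩ := hx (Function.update x j i) ⟨j, by simpa using hi⟩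
  obtain rfl : k = j := by
    by_contra h
    exact hk (Function.update_of_ne h _ _)
  simpa using hle

lemma IsNE.load_le_load_add_ptime (hx : IsNE s q f x) {j : Fin n} {i : Fin 2} (hi : i ≠ x j) :
    load s q f x (x j) ≤ load s q f x i + ptime s q f i j :=
  load_update_of_ne hi.symm ▸ hx j i hi

lemma IsSE.load_le_makespan_of_makespan_lt (hx : IsSE s q f x) {a b : Fin 2} (hab : a ≠ b)
    (h : makespan s q f y < load s q f x a) : load s q f x b ≤ makespan s q f y := by
  have hxy : ∃ j, y j ≠ x j := by
    by_contra! hyx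
    rw [funext hyx] at h
    exact (load_le_makespan x a).not_gt h
  obtain ⟨j, -, hj⟩ := hx y hxy
  have hj := hj.trans (load_le_makespan y (y j))
  rcases fin_two_eq_or_eq_of_ne hab (x j) with hxj | hxj <;> rw [hxj] at hj
  exacts [absurd hj h.not_ge, hj]

lemma load_le_load_add_sum_movers (hs : 0 ≤ s) (hq : ∀ j, 0 ≤ q j) {a b : Fin 2} (hab : a ≠ b)
    (hfav : ∀ j, x j = a → y j = b → f j ≠ b) :
    load s q f x a ≤ load s q f y a + ∑ j ∈ movers f x y a b a, q j := by
  rw [movers, sum_filter]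
  refine load_le_load_add_sum _ fun j => ?_
  rcases fin_two_eq_or_eq_of_ne hab (x j) with hxj | hxj <;>
    rcases fin_two_eq_or_eq_of_ne hab (y j) with hyj | hyj
  · simp [hxj, hyj, hab]
  · have hfj : f j = a := (fin_two_eq_or_eq_of_ne hab (f j)).resolve_right (hfav j hxj hyj)
    simp [hxj, hyj, hfj, hab.symm, ptime]
  · simp [hxj, hyj, hab.symm, ptime_nonneg hs hq]
  · simp [hxj, hyj, hab.symm]

lemma IsSE.coalition_blocked (hs : 0 ≤ s) (hq : ∀ j, 0 ≤ q j) (hx : IsSE s q f x) {a b : Fin 2}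
    (hab : a ≠ b) {js : Fin n} (hxjs : x js = a) (hyjs : y js = b) (hfjs : f js = b) :
    load s q f x a ≤ load s q f y b + ∑ j ∈ movers f x y b a b, q j ∨
      load s q f x b + s * q js ≤ load s q f x a + ∑ j ∈ movers f x y b a a, q j := by
  set z := Function.update (fun j => if x j = b ∧ y j = a ∧ f j = a then a else x j) js b
  have hzjs : z js = b := by simp [z]
  have hz : ∀ j ≠ js, z j = if x j = b ∧ y j = a ∧ f j = a then a else x j := fun j hj => by
    simp [z, hj]
  obtain ⟨j, hjz, hj⟩ := hx z ⟨js, by rw [hzjs, hxjs]; exact hab.symm⟩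
  by_cases hjjs : j = js
  · left
    rw [hjjs, hxjs, hzjs] at hj
    refine hj.trans ?_
    rw [movers, sum_filter]
    refine load_le_load_add_sum _ fun k => ?_
    by_cases hk : k = js
    · simp [hk, hzjs, hyjs, hab.symm]
    rw [hz k hk]
    rcases fin_two_eq_or_eq_of_ne hab (x k) with hxk | hxk <;>
      rcases fin_two_eq_or_eq_of_ne hab (y k) with hyk | hyk <;>
      rcases fin_two_eq_or_eq_of_ne hab (f k) with hfk | hfk <;>
      simp [hxk, hyk, hfk, hab, hab.symm, ptime, hq, mul_nonneg hs (hq k)]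
  · right
    have hjT : x j = b ∧ y j = a ∧ f j = a := by
      by_contra h
      exact hjz (by simp [hz j hjjs, h])
    rw [hjT.1, hz j hjjs, if_pos hjT] at hj
    have hza : load s q f z a ≤ load s q f x a +
        ∑ k, ((if x k = b ∧ y k = a ∧ f k = a then q k else 0) - if k = js then s * q k else 0) := by
      refine load_le_load_add_sum _ fun k => ?_
      by_cases hk : k = js
      · simp [hk, hzjs, hxjs, hfjs, hab, hab.symm, ptime]
      rw [hz k hk]
      rcases fin_two_eq_or_eq_of_ne hab (x k) with hxk | hxk <;>
        rcases fin_two_eq_or_eq_of_ne hab (y k) with hyk | hyk <;>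
        rcases fin_two_eq_or_eq_of_ne hab (f k) with hfk | hfk <;>
        simp [hxk, hyk, hfk, hab, hab.symm, hk, ptime]
    rw [sum_sub_distrib, ← sum_filter, sum_ite_eq'] at hza
    simp only [mem_univ, if_true] at hza
    rw [movers]
    linarith

theorem IsSE.mul_load_le_mul_makespan (hs : 2 ≤ s) (hq : ∀ j, 0 ≤ q j) (hx : IsSE s q f x)
    (y : Fin n → Fin 2) {a b : Fin 2} (hab : a ≠ b) :
    s * load s q f x a ≤ (s + 1) * makespan s q f y := by
  have hs0 : 0 ≤ s := by linarith
  set M := makespan s q f y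
  have hMa : load s q f y a ≤ M := load_le_makespan y a
  have hMb : load s q f y b ≤ M := load_le_makespan y b
  have hM0 : 0 ≤ M := (load_nonneg hs0 hq y a).trans hMa
  rcases le_or_gt (load s q f x a) M with hCM | hCM
  · nlinarith
  have hLM := hx.load_le_makespan_of_makespan_lt hab hCM
  by_cases hfav : ∃ js, x js = a ∧ y js = b ∧ f js = b
  · obtain ⟨js, hxjs, hyjs, hfjs⟩ := hfav
    rcases hx.coalition_blocked hs0 hq hab hxjs hyjs hfjs with hC | hL
    · have hV : s * ∑ j ∈ movers f x y b a b, q j ≤ load s q f y a :=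
        mul_sum_movers_le_load_right hs0 hq hab.symm
      nlinarith
    · have hNE := hx.isNE.load_le_load_add_ptime (hxjs ▸ hab.symm : b ≠ x js)
      rw [hxjs, ptime, if_pos hfjs] at hNE
      have hU : s * ∑ j ∈ movers f x y b a a, q j ≤ load s q f x b :=
        mul_sum_movers_le_load_left hs0 hq hab
      set C := load s q f x a
      set L := load s q f x b
      set U := ∑ j ∈ movers f x y b a a, q j
      have hd : (s - 1) * (C - L) ≤ U := by nlinarith
      -- `s (C - L) ≤ s (s - 1) (C - L) ≤ s U ≤ L ≤ M`, the first step needing `s ≥ 2`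
      have hsd : s * (C - L) ≤ M := by
        nlinarith [mul_nonneg (mul_nonneg hs0 (sub_nonneg.2 hs)) (by linarith : 0 ≤ C - L)]
      nlinarith
  · push Not at hfav
    have hC := load_le_load_add_sum_movers hs0 hq hab hfav
    have hΦ : s * ∑ j ∈ movers f x y a b a, q j ≤ load s q f y b :=
      mul_sum_movers_le_load_right hs0 hq hab
    nlinarith

end

theorem spoa_upper_interval8_general
    (s₇ : ℝ) (hs₇lo : 2 < s₇)
    (s : ℝ) (hs : s₇ ≤ s)
    {n : ℕ} (q : Fin n → ℝ) (hq : ∀ j, 0 < q j)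
    (f : Fin n → Fin 2) (x : Fin n → Fin 2) (hx : IsSE s q f x) :
    makespan s q f x ≤ ((s + 1)/s) * optMakespan s q f := by
  have hs2 : 2 ≤ s := by linarith
  have hbound (y : Fin n → Fin 2) : s * makespan s q f x ≤ (s + 1) * makespan s q f y := by
    rw [makespan, mul_max_of_nonneg _ _ (by linarith)]
    exact max_le (hx.mul_load_le_mul_makespan hs2 (fun j => (hq j).le) y Fin.zero_ne_one)
      (hx.mul_load_le_mul_makespan hs2 (fun j => (hq j).le) y Fin.zero_ne_one.symm)
  have hopt : s / (s + 1) * makespan s q f x ≤ optMakespan s q f :=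
    le_ciInf fun y => by
      rw [div_mul_eq_mul_div, div_le_iff₀ (by linarith)]
      linarith [hbound y]
  calc makespan s q f x = (s + 1) / s * (s / (s + 1) * makespan s q f x) := by
        field_simp
    _ ≤ (s + 1) / s * optMakespan s q f := by gcongr

theorem spoa_upper_interval8
    (s₇ : ℝ) (hs₇lo : 2 < s₇) (hs₇hi : s₇ < 3)
    (hs₇root : s₇^3 - 2*s₇^2 - s₇ + 1 = 0)
    (s : ℝ) (hs : s₇ ≤ s)
    {n : ℕ} (q : Fin n → ℝ) (hq : ∀ j, 0 < q j)
    (f : Fin n → Fin 2) (x : Fin n → Fin 2) (hx : IsSE s q f x) :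
    makespan s q f x ≤ ((s + 1)/s) * optMakespan s q f :=
  spoa_upper_interval8_general s₇ hs₇lo s hs q hq f x hx
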